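/- arXiv:2002.07411 — 5 statements merged into one kernel-verified Lean document; each statement's English description precedes it below -/
import Mathlib

section
/- Let P be a reversible transition matrix on finite V with stationary distribution π and spectral value λ = max{|λ₂|,|λ_n|}. Then for any S, T ⊆ V and any C² function h: ℝ → ℝ, |∑_{v∈S} π(v) h(P(v,T)) − π(S) h(π(T)) − h'(π(T))·(Q(S,T) − π(S)π(T))| ≤ (K₂(h)/2)·λ²·π(T)(1 − π(T)), where Q(S,T) = ∑_{v∈S} π(v) P(v,T) and K₂(h) = max_{x∈[0,1]}|h''(x)|. -/
/-!
Expanding `h` to second order around `π(T)` at each point `P(v,T)` leaves, after summing with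
weights `π(v)` over `S`, only the Lagrange remainders, which are bounded by
`K₂/2 · ∑_v π(v) (P(v,T) − π(T))²`. This is the variance of `P 1_T`, i.e. `‖P g‖²_π` for the
centred indicator `g = 1_T − π(T)`, and the spectral bound gives `‖P g‖²_π ≤ λ² ‖g‖²_π =
λ² π(T)(1 − π(T))`.
-/

open Set

theorem exists_taylor_lagrange_two {h : ℝ → ℝ} (hh : ContDiff ℝ 2 h) {x y : ℝ} (hxy : y ≠ x) :
    ∃ c ∈ uIoo y x, h x - h y - deriv h y * (x - y) = deriv (deriv h) c * (x - y) ^ 2 / 2 := by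
  obtain ⟨c, hc, hrem⟩ :=
    taylor_mean_remainder_lagrange_iteratedDeriv (n := 1) hxy hh.contDiffOn
  refine ⟨c, hc, ?_⟩
  have hderiv : iteratedDerivWithin 1 h (uIcc y x) y = deriv h y := by
    rw [iteratedDerivWithin_one]
    exact (hh.differentiable two_ne_zero y).derivWithin (uniqueDiffOn_uIcc hxy y left_mem_uIcc)
  rw [taylor_within_apply, Finset.sum_range_succ, Finset.sum_range_one, hderiv,
    iteratedDeriv_succ, iteratedDeriv_one] at hrem
  simp only [iteratedDerivWithin_zero, Nat.factorial, smul_eq_mul] at hrem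
  push_cast at hrem
  linarith

theorem abs_sub_sub_deriv_mul_le {h : ℝ → ℝ} (hh : ContDiff ℝ 2 h) {a b K x y : ℝ}
    (hK : ∀ z ∈ Icc a b, |deriv (deriv h) z| ≤ K) (hx : x ∈ Icc a b) (hy : y ∈ Icc a b) :
    |h x - h y - deriv h y * (x - y)| ≤ K / 2 * (x - y) ^ 2 := by
  rcases eq_or_ne y x with rfl | hxy
  · simp
  obtain ⟨c, hc, hrem⟩ := exists_taylor_lagrange_two hh hxy
  have hcK : |deriv (deriv h) c| ≤ K :=
    hK c (Icc_subset_Icc (le_min hy.1 hx.1) (max_le hy.2 hx.2) (Ioo_subset_Icc_self hc))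
  rw [hrem, abs_div, abs_mul, abs_sq, abs_two]
  nlinarith [sq_nonneg (x - y)]

open Finset

theorem abs_sum_mul_taylor_remainder_le {ι : Type*} [Fintype ι] {h : ℝ → ℝ} (hh : ContDiff ℝ 2 h)
    {a b K p : ℝ} (hK : ∀ z ∈ Set.Icc a b, |deriv (deriv h) z| ≤ K)
    {w f : ι → ℝ} (hw : ∀ i, 0 ≤ w i) (hf : ∀ i, f i ∈ Set.Icc a b) (hp : p ∈ Set.Icc a b)
    (S : Finset ι) :
    |(∑ i ∈ S, w i * h (f i)) - (∑ i ∈ S, w i) * h p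
        - deriv h p * ((∑ i ∈ S, w i * f i) - (∑ i ∈ S, w i) * p)|
      ≤ K / 2 * ∑ i, w i * (f i - p) ^ 2 := by
  have hK0 : 0 ≤ K := (abs_nonneg _).trans (hK p hp)
  have hlin : (∑ i ∈ S, w i * h (f i)) - (∑ i ∈ S, w i) * h p
        - deriv h p * ((∑ i ∈ S, w i * f i) - (∑ i ∈ S, w i) * p)
      = ∑ i ∈ S, w i * (h (f i) - h p - deriv h p * (f i - p)) := by
    simp only [mul_sub, sum_sub_distrib, mul_left_comm (w _) (deriv h p), ← mul_sum, ← sum_mul]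
  rw [hlin, mul_sum]
  calc |∑ i ∈ S, w i * (h (f i) - h p - deriv h p * (f i - p))|
      ≤ ∑ i ∈ S, w i * (K / 2 * (f i - p) ^ 2) := by
        refine (abs_sum_le_sum_abs _ _).trans (sum_le_sum fun i _ => ?_)
        rw [abs_mul, abs_of_nonneg (hw i)]
        exact mul_le_mul_of_nonneg_left (abs_sub_sub_deriv_mul_le hh hK (hf i) hp) (hw i)
    _ ≤ ∑ i, w i * (K / 2 * (f i - p) ^ 2) :=
        sum_le_univ_sum_of_nonneg fun i => mul_nonneg (hw i) (by positivity)
    _ = ∑ i, K / 2 * (w i * (f i - p) ^ 2) := by simp only [mul_left_comm]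

section IndicatorSums

variable {V : Type*} [Fintype V]

theorem sum_mem_Icc_zero_one {w : V → ℝ} (hw0 : ∀ v, 0 ≤ w v) (hw1 : ∑ v, w v = 1)
    (T : Finset V) : ∑ t ∈ T, w t ∈ Set.Icc 0 1 :=
  ⟨sum_nonneg fun t _ => hw0 t, hw1 ▸ sum_le_univ_sum_of_nonneg hw0⟩

variable [DecidableEq V]

theorem sum_mul_indicator_sub (w : V → ℝ) (T : Finset V) (c : ℝ) :
    ∑ v, w v * ((if v ∈ T then 1 else 0) - c) = ∑ t ∈ T, w t - c * ∑ v, w v := by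
  simp only [mul_sub, mul_ite, mul_one, mul_zero, sum_sub_distrib, Fintype.sum_ite_mem,
    ← sum_mul, mul_comm c]

theorem sum_mul_indicator_sub_sq {w : V → ℝ} (hw : ∑ v, w v = 1) (T : Finset V) :
    ∑ v, w v * ((if v ∈ T then 1 else 0) - ∑ t ∈ T, w t) ^ 2
      = (∑ t ∈ T, w t) * (1 - ∑ t ∈ T, w t) := by
  set c := ∑ t ∈ T, w t
  have hsq : ∀ v, w v * ((if v ∈ T then 1 else 0) - c) ^ 2
      = (1 - 2 * c) * (w v * ((if v ∈ T then 1 else 0) - c)) + c * (1 - c) * w v := by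
    intro v
    -- the indicator is idempotent
    split_ifs <;> ring
  simp only [hsq, sum_add_distrib, ← mul_sum, sum_mul_indicator_sub, hw]
  ring

end IndicatorSums

theorem sum_mul_sq_rowSum_sub_le {V : Type*} [Fintype V] (P : V → V → ℝ) (π : V → ℝ)
    (hProw : ∀ u, ∑ v, P u v = 1) (hπ1 : ∑ v, π v = 1) (lam : ℝ)
    (hexp : ∀ g : V → ℝ, ∑ v, π v * g v = 0 →
      ∑ u, π u * (∑ v, P u v * g v) ^ 2 ≤ lam ^ 2 * ∑ v, π v * g v ^ 2)
    (T : Finset V) :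
    ∑ u, π u * (∑ t ∈ T, P u t - ∑ t ∈ T, π t) ^ 2
      ≤ lam ^ 2 * ((∑ t ∈ T, π t) * (1 - ∑ t ∈ T, π t)) := by
  classical
  have hmean : ∑ v, π v * ((if v ∈ T then 1 else 0) - ∑ t ∈ T, π t) = 0 := by
    rw [sum_mul_indicator_sub, hπ1, mul_one, sub_self]
  simpa only [sum_mul_indicator_sub, hProw, mul_one, sum_mul_indicator_sub_sq hπ1] using
    hexp _ hmean

theorem stmt_2_general {V : Type*} [Fintype V]
    (P : V → V → ℝ) (π : V → ℝ)
    (hP0 : ∀ u v, 0 ≤ P u v) (hProw : ∀ u, ∑ v, P u v = 1)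
    (hπ0 : ∀ v, 0 ≤ π v) (hπ1 : ∑ v, π v = 1)
    (lam : ℝ)
    (hexp : ∀ g : V → ℝ, ∑ v, π v * g v = 0 →
      ∑ u, π u * (∑ v, P u v * g v) ^ 2 ≤ lam ^ 2 * ∑ v, π v * g v ^ 2)
    (h : ℝ → ℝ) (hC2 : ContDiff ℝ 2 h) (K₂ : ℝ)
    (hK₂ : IsGreatest ((fun x => |deriv (deriv h) x|) '' Set.Icc (0:ℝ) 1) K₂)
    (S T : Finset V) :
    |(∑ v ∈ S, π v * h (∑ t ∈ T, P v t)) - (∑ v ∈ S, π v) * h (∑ t ∈ T, π t)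
        - deriv h (∑ t ∈ T, π t) *
          ((∑ v ∈ S, π v * (∑ t ∈ T, P v t)) - (∑ v ∈ S, π v) * (∑ t ∈ T, π t))|
      ≤ K₂ / 2 * lam ^ 2 * (∑ t ∈ T, π t) * (1 - ∑ t ∈ T, π t) := by
  have hK : ∀ z ∈ Set.Icc (0 : ℝ) 1, |deriv (deriv h) z| ≤ K₂ := fun z hz => hK₂.2 ⟨z, hz, rfl⟩
  have hK0 : 0 ≤ K₂ := by
    obtain ⟨z, _, hz⟩ := hK₂.1
    exact hz ▸ abs_nonneg _
  calc _ ≤ K₂ / 2 * ∑ v, π v * (∑ t ∈ T, P v t - ∑ t ∈ T, π t) ^ 2 :=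
        abs_sum_mul_taylor_remainder_le hC2 hK hπ0
          (fun v => sum_mem_Icc_zero_one (hP0 v) (hProw v) T) (sum_mem_Icc_zero_one hπ0 hπ1 T) S
    _ ≤ K₂ / 2 * (lam ^ 2 * ((∑ t ∈ T, π t) * (1 - ∑ t ∈ T, π t))) := by
        gcongr
        exact sum_mul_sq_rowSum_sub_le P π hProw hπ1 lam hexp T
    _ = K₂ / 2 * lam ^ 2 * (∑ t ∈ T, π t) * (1 - ∑ t ∈ T, π t) := by ring

/-- Lemma: second-order approximation of `Q_h(S,T) = ∑_{v∈S} π(v) h(P(v,T))`. -/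
theorem stmt_2 {V : Type*} [Fintype V] [Nonempty V]
    (P : V → V → ℝ) (π : V → ℝ)
    (hP0 : ∀ u v, 0 ≤ P u v) (hProw : ∀ u, ∑ v, P u v = 1)
    (hπ0 : ∀ v, 0 ≤ π v) (hπ1 : ∑ v, π v = 1)
    (hrev : ∀ u v, π u * P u v = π v * P v u)
    (lam : ℝ) (hlam : 0 ≤ lam)
    (hexp : ∀ g : V → ℝ, ∑ v, π v * g v = 0 →
      ∑ u, π u * (∑ v, P u v * g v) ^ 2 ≤ lam ^ 2 * ∑ v, π v * g v ^ 2)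
    (h : ℝ → ℝ) (hC2 : ContDiff ℝ 2 h) (K₂ : ℝ)
    (hK₂ : IsGreatest ((fun x => |deriv (deriv h) x|) '' Set.Icc (0:ℝ) 1) K₂)
    (S T : Finset V) :
    |(∑ v ∈ S, π v * h (∑ t ∈ T, P v t)) - (∑ v ∈ S, π v) * h (∑ t ∈ T, π t)
        - deriv h (∑ t ∈ T, π t) *
          ((∑ v ∈ S, π v * (∑ t ∈ T, P v t)) - (∑ v ∈ S, π v) * (∑ t ∈ T, π t))|
      ≤ K₂ / 2 * lam ^ 2 * (∑ t ∈ T, π t) * (1 - ∑ t ∈ T, π t) :=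
  stmt_2_general P π hP0 hProw hπ0 hπ1 lam hexp h hC2 K₂ hK₂ S T
end

section
/- Let P be a reversible transition matrix on finite V with stationary distribution π and spectral value λ. For any S, T ⊆ V and any C² function h: ℝ → ℝ, |∑_{v∈S} π(v)² h(P(v,T)) − (∑_{v∈S} π(v)²) · h(π(T))| ≤ K₁(h) · ‖π‖₃^{3/2} · λ · √(π(T)(1 − π(T))), where K₁(h) = max_{x∈[0,1]} |h'(x)| and ‖π‖₃ = (∑_{v∈V} π(v)³)^{1/3}. -/
/-- Lemma: approximation of `R_h(S,T) = ∑_{v∈S} π(v)² h(P(v,T))`.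
Here `‖π‖₃^{3/2} = (∑_v π(v)³)^{1/2}`. -/
theorem stmt_3 {V : Type*} [Fintype V] [Nonempty V]
    (P : V → V → ℝ) (π : V → ℝ)
    (hP0 : ∀ u v, 0 ≤ P u v) (hProw : ∀ u, ∑ v, P u v = 1)
    (hπ0 : ∀ v, 0 ≤ π v) (hπ1 : ∑ v, π v = 1)
    (hrev : ∀ u v, π u * P u v = π v * P v u)
    (lam : ℝ) (hlam : 0 ≤ lam)
    (hexp : ∀ g : V → ℝ, ∑ v, π v * g v = 0 →
      ∑ u, π u * (∑ v, P u v * g v) ^ 2 ≤ lam ^ 2 * ∑ v, π v * g v ^ 2)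
    (h : ℝ → ℝ) (hC2 : ContDiff ℝ 2 h) (K₁ : ℝ)
    (hK₁ : IsGreatest ((fun x => |deriv h x|) '' Set.Icc (0:ℝ) 1) K₁)
    (S T : Finset V) :
    |(∑ v ∈ S, π v ^ 2 * h (∑ t ∈ T, P v t)) - (∑ v ∈ S, π v ^ 2) * h (∑ t ∈ T, π t)|
      ≤ K₁ * Real.sqrt (∑ v, π v ^ 3) * lam *
          Real.sqrt ((∑ t ∈ T, π t) * (1 - ∑ t ∈ T, π t)) := by
  classical
  set a : ℝ := ∑ t ∈ T, π t with ha
  set p : V → ℝ := fun v => ∑ t ∈ T, P v t with hp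
  -- K₁ nonneg
  obtain ⟨x₀, hx₀, hx₀eq⟩ := hK₁.1
  have hK₁0 : 0 ≤ K₁ := hx₀eq ▸ abs_nonneg _
  have hK₁bd : ∀ x ∈ Set.Icc (0:ℝ) 1, |deriv h x| ≤ K₁ := fun x hx =>
    hK₁.2 ⟨x, hx, rfl⟩
  -- membership of a and p v in [0,1]
  have ha01 : a ∈ Set.Icc (0:ℝ) 1 := by
    constructor
    · exact Finset.sum_nonneg fun t _ => hπ0 t
    · rw [← hπ1]; exact Finset.sum_le_sum_of_subset_of_nonneg (Finset.subset_univ T)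
        (fun i _ _ => hπ0 i)
  have hp01 : ∀ v, p v ∈ Set.Icc (0:ℝ) 1 := by
    intro v
    constructor
    · exact Finset.sum_nonneg fun t _ => hP0 v t
    · rw [← hProw v]; exact Finset.sum_le_sum_of_subset_of_nonneg (Finset.subset_univ T)
        (fun i _ _ => hP0 v i)
  -- Lipschitz bound from derivative bound
  have hlip : ∀ x ∈ Set.Icc (0:ℝ) 1, ∀ y ∈ Set.Icc (0:ℝ) 1, |h y - h x| ≤ K₁ * |y - x| := by
    intro x hx y hy
    have hd : ∀ z ∈ Set.Icc (0:ℝ) 1, HasDerivWithinAt h (deriv h z) (Set.Icc 0 1) z :=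
      fun z _ => ((hC2.differentiable (by norm_num)).differentiableAt.hasDerivAt).hasDerivWithinAt
    have := (convex_Icc (0:ℝ) 1).norm_image_sub_le_of_norm_hasDerivWithin_le hd
      (fun z hz => by simpa using hK₁bd z hz) hx hy
    simpa [Real.norm_eq_abs] using this
  -- Step 1: bound LHS by K₁ * ∑_v π² |p v - a|
  have step1 : |(∑ v ∈ S, π v ^ 2 * h (p v)) - (∑ v ∈ S, π v ^ 2) * h a|
      ≤ K₁ * ∑ v, π v ^ 2 * |p v - a| := by
    rw [Finset.sum_mul, ← Finset.sum_sub_distrib]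
    calc |∑ v ∈ S, (π v ^ 2 * h (p v) - π v ^ 2 * h a)|
        ≤ ∑ v ∈ S, |π v ^ 2 * h (p v) - π v ^ 2 * h a| := Finset.abs_sum_le_sum_abs _ _
      _ ≤ ∑ v ∈ S, π v ^ 2 * (K₁ * |p v - a|) := by
          apply Finset.sum_le_sum
          intro v _
          rw [← mul_sub, abs_mul, abs_of_nonneg (sq_nonneg (π v))]
          exact mul_le_mul_of_nonneg_left (hlip a ha01 (p v) (hp01 v)) (sq_nonneg _)
      _ ≤ ∑ v, π v ^ 2 * (K₁ * |p v - a|) := by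
          apply Finset.sum_le_sum_of_subset_of_nonneg (Finset.subset_univ S)
          intro v _ _
          positivity
      _ = K₁ * ∑ v, π v ^ 2 * |p v - a| := by
          rw [Finset.mul_sum]; congr 1; ext v; ring
  -- Cauchy-Schwarz
  have hcs : (∑ v, π v ^ 2 * |p v - a|) ^ 2
      ≤ (∑ v, π v ^ 3) * (∑ v, π v * (p v - a) ^ 2) := by
    have key := Finset.sum_mul_sq_le_sq_mul_sq Finset.univ
      (fun v => Real.sqrt (π v ^ 3)) (fun v => Real.sqrt (π v) * |p v - a|)
    have e1 : ∀ v : V, Real.sqrt (π v ^ 3) * (Real.sqrt (π v) * |p v - a|)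
        = π v ^ 2 * |p v - a| := by
      intro v
      rw [← mul_assoc, ← Real.sqrt_mul (pow_nonneg (hπ0 v) 3)]
      have : π v ^ 3 * π v = (π v ^ 2) ^ 2 := by ring
      rw [this, Real.sqrt_sq (sq_nonneg _)]
    have e2 : ∀ v : V, Real.sqrt (π v ^ 3) ^ 2 = π v ^ 3 := fun v =>
      Real.sq_sqrt (pow_nonneg (hπ0 v) 3)
    have e3 : ∀ v : V, (Real.sqrt (π v) * |p v - a|) ^ 2 = π v * (p v - a) ^ 2 := by
      intro v
      rw [mul_pow, Real.sq_sqrt (hπ0 v), sq_abs]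
    calc (∑ v, π v ^ 2 * |p v - a|) ^ 2
        = (∑ v, Real.sqrt (π v ^ 3) * (Real.sqrt (π v) * |p v - a|)) ^ 2 := by
          congr 1; exact Finset.sum_congr rfl fun v _ => (e1 v).symm
      _ ≤ (∑ v, Real.sqrt (π v ^ 3) ^ 2) * (∑ v, (Real.sqrt (π v) * |p v - a|) ^ 2) := key
      _ = (∑ v, π v ^ 3) * (∑ v, π v * (p v - a) ^ 2) := by
          congr 1
          · exact Finset.sum_congr rfl fun v _ => e2 v
          · exact Finset.sum_congr rfl fun v _ => e3 v
  -- spectral bound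
  have hspec : ∑ v, π v * (p v - a) ^ 2 ≤ lam ^ 2 * (a * (1 - a)) := by
    set g : V → ℝ := fun v => (if v ∈ T then (1:ℝ) else 0) - a with hg
    have hmean : ∑ v, π v * g v = 0 := by
      simp only [hg, mul_sub, Finset.sum_sub_distrib, ← Finset.sum_mul, hπ1, one_mul]
      rw [Finset.sum_congr rfl (fun v _ => by rw [mul_ite, mul_one, mul_zero]),
        Finset.sum_ite_mem, Finset.univ_inter]
      ring
    have hPg : ∀ u, (∑ v, P u v * g v) = p u - a := by
      intro u
      simp only [hg, mul_sub, Finset.sum_sub_distrib, ← Finset.sum_mul, hProw, one_mul]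
      rw [Finset.sum_congr rfl (fun v _ => by rw [mul_ite, mul_one, mul_zero]),
        Finset.sum_ite_mem, Finset.univ_inter]
    have hvar : ∑ v, π v * g v ^ 2 = a * (1 - a) := by
      have : ∀ v : V, π v * g v ^ 2 = π v * (if v ∈ T then (1:ℝ) else 0)
          - 2 * a * (π v * (if v ∈ T then (1:ℝ) else 0)) + a ^ 2 * π v := by
        intro v
        by_cases hv : v ∈ T <;> simp [hg, hv] <;> ring
      rw [Finset.sum_congr rfl fun v _ => this v]
      rw [Finset.sum_add_distrib, Finset.sum_sub_distrib, ← Finset.mul_sum, ← Finset.mul_sum]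
      rw [Finset.sum_congr rfl (fun v _ => by rw [mul_ite, mul_one, mul_zero]),
        Finset.sum_ite_mem, Finset.univ_inter, hπ1]
      ring
    have := hexp g hmean
    rw [hvar] at this
    calc ∑ v, π v * (p v - a) ^ 2 = ∑ u, π u * (∑ v, P u v * g v) ^ 2 := by
          exact Finset.sum_congr rfl fun u _ => by rw [hPg u]
      _ ≤ lam ^ 2 * (a * (1 - a)) := this
  -- combine
  have hsum0 : 0 ≤ ∑ v, π v ^ 2 * |p v - a| :=
    Finset.sum_nonneg fun v _ => by positivity
  have hbd : ∑ v, π v ^ 2 * |p v - a|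
      ≤ Real.sqrt (∑ v, π v ^ 3) * (lam * Real.sqrt (a * (1 - a))) := by
    have h1 : (∑ v, π v ^ 2 * |p v - a|) ^ 2
        ≤ (∑ v, π v ^ 3) * (lam ^ 2 * (a * (1 - a))) :=
      le_trans hcs (mul_le_mul_of_nonneg_left hspec
        (Finset.sum_nonneg fun v _ => pow_nonneg (hπ0 v) 3))
    have h2 := Real.sqrt_le_sqrt h1
    rw [Real.sqrt_sq hsum0] at h2
    calc ∑ v, π v ^ 2 * |p v - a| ≤ Real.sqrt ((∑ v, π v ^ 3) * (lam ^ 2 * (a * (1 - a)))) := h2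
      _ = Real.sqrt (∑ v, π v ^ 3) * (lam * Real.sqrt (a * (1 - a))) := by
          rw [Real.sqrt_mul (Finset.sum_nonneg fun v _ => pow_nonneg (hπ0 v) 3),
            Real.sqrt_mul (sq_nonneg lam), Real.sqrt_sq hlam]
  calc |(∑ v ∈ S, π v ^ 2 * h (p v)) - (∑ v ∈ S, π v ^ 2) * h a|
      ≤ K₁ * ∑ v, π v ^ 2 * |p v - a| := step1
    _ ≤ K₁ * (Real.sqrt (∑ v, π v ^ 3) * (lam * Real.sqrt (a * (1 - a)))) :=
        mul_le_mul_of_nonneg_left hbd hK₁0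
    _ = K₁ * Real.sqrt (∑ v, π v ^ 3) * lam * Real.sqrt (a * (1 - a)) := by ring
end

section
/- For each integer k ≥ 1, define f_k(x) = ∑_{i=⌊k/2⌋+1}^{k} C(k,i) x^i (1−x)^{k−i} and the updating function H_f(x) = x(1 − f(1−x)) + (1−x)f(x). Then H_{f_k} = f_k if k is odd, and H_{f_k} = f_{k+1} if k is even, as functions on [0,1]. -/
/-- The betrayal function of best-of-`k`:
`f_k(x) = ∑_{i=⌊k/2⌋+1}^{k} C(k,i) xⁱ (1−x)^{k−i}`. -/
noncomputable def bestOfF (k : ℕ) (x : ℝ) : ℝ :=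
  ∑ i ∈ Finset.Icc (k / 2 + 1) k, (k.choose i : ℝ) * x ^ i * (1 - x) ^ (k - i)

/-- The updating function `H_f(x) = x(1 − f(1−x)) + (1−x) f(x)`. -/
noncomputable def updF (f : ℝ → ℝ) (x : ℝ) : ℝ :=
  x * (1 - f (1 - x)) + (1 - x) * f x

open Finset in
private lemma sum_all (k : ℕ) (x : ℝ) :
    ∑ i ∈ Finset.range (k+1), (k.choose i : ℝ) * x ^ i * (1 - x) ^ (k - i) = 1 := by
  have h := add_pow x (1-x) k
  simp only [add_sub_cancel, one_pow] at h
  calc ∑ i ∈ Finset.range (k+1), (k.choose i : ℝ) * x ^ i * (1 - x) ^ (k - i)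
      = ∑ i ∈ Finset.range (k+1), x ^ i * (1 - x) ^ (k - i) * (k.choose i : ℝ) :=
        Finset.sum_congr rfl (fun i _ => by ring)
    _ = 1 := h.symm

open Finset in
private lemma reflect (k : ℕ) (x : ℝ) :
    (1:ℝ) - bestOfF k (1-x) =
      ∑ i ∈ Finset.Icc (k - k/2) k, (k.choose i : ℝ) * x ^ i * (1 - x) ^ (k - i) := by
  have hb : bestOfF k (1-x)
      = ∑ j ∈ Finset.Ico 0 (k - k/2), (k.choose j : ℝ) * x ^ j * (1 - x) ^ (k - j) := by
    unfold bestOfF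
    simp only [sub_sub_cancel]
    refine Finset.sum_nbij' (fun i => k - i) (fun j => k - j) ?_ ?_ ?_ ?_ ?_
    · intro a ha; simp only [Finset.mem_Icc, Finset.mem_Ico] at *; omega
    · intro b hb; simp only [Finset.mem_Icc, Finset.mem_Ico] at *; omega
    · intro a ha; simp only [Finset.mem_Icc] at ha; show k - (k - a) = a; omega
    · intro b hb; simp only [Finset.mem_Ico] at hb; show k - (k - b) = b; omega
    · intro a ha
      simp only [Finset.mem_Icc] at ha
      simp only [Nat.choose_symm ha.2, Nat.sub_sub_self ha.2]
      ring
  have hsplit := Finset.sum_Ico_consecutive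
    (fun i => (k.choose i : ℝ) * x ^ i * (1 - x) ^ (k - i))
    (Nat.zero_le (k - k/2)) (by omega : k - k/2 ≤ k + 1)
  have h1 := sum_all k x
  rw [Finset.range_eq_Ico] at h1
  rw [hb, ← Finset.Ico_add_one_right_eq_Icc]
  rw [← hsplit] at h1
  linarith [h1]

open Finset in
private lemma pascal_even (m : ℕ) (x : ℝ) :
    bestOfF (2*m+1) x = bestOfF (2*m) x + ((2*m).choose m : ℝ) * x^(m+1) * (1-x)^m := by
  unfold bestOfF
  have hhalf : (2*m+1)/2 = m := by omega
  have hhalf2 : (2*m)/2 = m := by omega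
  rw [hhalf, hhalf2]
  have hmap : Finset.Icc (m+1) (2*m+1) = (Finset.Icc m (2*m)).map ⟨(· + 1), add_left_injective 1⟩ := by
    ext a; simp only [Finset.mem_Icc, Finset.mem_map, Function.Embedding.coeFn_mk]
    constructor
    · intro h; exact ⟨a - 1, by omega, by omega⟩
    · rintro ⟨b, hb, rfl⟩; omega
  rw [hmap, Finset.sum_map]
  simp only [Function.Embedding.coeFn_mk]
  have hterm : ∀ j ∈ Finset.Icc m (2*m),
      ((2*m+1).choose (j+1) : ℝ) * x ^ (j+1) * (1 - x) ^ (2*m+1 - (j+1))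
      = ((2*m).choose j : ℝ) * x * (x ^ j * (1 - x) ^ (2*m - j))
        + ((2*m).choose (j+1) : ℝ) * x ^ (j+1) * (1 - x) ^ (2*m+1 - (j+1)) := by
    intro j hj
    simp only [Finset.mem_Icc] at hj
    rw [Nat.choose_succ_succ (2*m) j]
    have h1 : 2*m+1 - (j+1) = 2*m - j := by omega
    simp only [h1, Nat.succ_eq_add_one]
    push_cast
    ring
  rw [Finset.sum_congr rfl hterm, Finset.sum_add_distrib]
  have hA : ∑ j ∈ Finset.Icc m (2*m),
      ((2*m).choose j : ℝ) * x * (x ^ j * (1 - x) ^ (2*m - j))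
      = x * (((2*m).choose m : ℝ) * x^m * (1-x)^m
          + ∑ i ∈ Finset.Icc (m+1) (2*m), ((2*m).choose i : ℝ) * x ^ i * (1 - x) ^ (2*m - i)) := by
    have hins : Finset.Icc m (2*m) = insert m (Finset.Icc (m+1) (2*m)) := by
      ext a; simp only [Finset.mem_Icc, Finset.mem_insert]; omega
    rw [hins, Finset.sum_insert (by simp), mul_add, Finset.mul_sum]
    congr 1
    · have : 2*m - m = m := by omega
      rw [this]; ring
    · exact Finset.sum_congr rfl (fun i _ => by ring)
  have hB : ∑ j ∈ Finset.Icc m (2*m),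
      ((2*m).choose (j+1) : ℝ) * x ^ (j+1) * (1 - x) ^ (2*m+1 - (j+1))
      = (1-x) * ∑ i ∈ Finset.Icc (m+1) (2*m), ((2*m).choose i : ℝ) * x ^ i * (1 - x) ^ (2*m - i) := by
    rw [← Finset.Ico_add_one_right_eq_Icc, Finset.sum_Ico_succ_top (by omega : m ≤ 2*m)]
    simp only [Nat.choose_succ_self, Nat.cast_zero, zero_mul, add_zero]
    rw [Finset.mul_sum]
    refine Finset.sum_nbij' (fun j => j + 1) (fun i => i - 1) ?_ ?_ ?_ ?_ ?_
    · intro a ha; simp only [Finset.mem_Ico, Finset.mem_Icc] at *; omega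
    · intro b hb; simp only [Finset.mem_Ico, Finset.mem_Icc] at *; omega
    · intro a _; show a + 1 - 1 = a; omega
    · intro b hb; simp only [Finset.mem_Icc] at hb; show b - 1 + 1 = b; omega
    · intro a ha
      simp only [Finset.mem_Ico] at ha
      rw [show 2*m+1 - (a+1) = (2*m - (a+1)) + 1 from by omega, pow_succ]
      ring
  rw [hA, hB]
  ring

/-- `H_{f_k} = f_k` if `k` is odd, and `H_{f_k} = f_{k+1}` if `k` is even,
as functions on `[0,1]`. -/
theorem stmt_6 (k : ℕ) (hk : 1 ≤ k) :
    (Odd k → ∀ x ∈ Set.Icc (0:ℝ) 1, updF (bestOfF k) x = bestOfF k x)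
    ∧ (Even k → ∀ x ∈ Set.Icc (0:ℝ) 1, updF (bestOfF k) x = bestOfF (k + 1) x) := by
  constructor
  · intro hodd x _
    obtain ⟨m, hm⟩ := hodd
    subst hm
    have hr := reflect (2*m+1) x
    rw [show 2*m+1 - (2*m+1)/2 = (2*m+1)/2 + 1 from by omega] at hr
    have h1 : (1:ℝ) - bestOfF (2*m+1) (1-x) = bestOfF (2*m+1) x := by
      rw [hr]; rfl
    unfold updF
    rw [h1]; ring
  · intro heven x _
    obtain ⟨m, hm⟩ := heven
    subst hm
    rw [show m + m = 2*m from by ring]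
    have hr := reflect (2*m) x
    rw [show 2*m - (2*m)/2 = m from by omega] at hr
    have hsplit : ∑ i ∈ Finset.Icc m (2*m), ((2*m).choose i : ℝ) * x ^ i * (1 - x) ^ (2*m - i)
        = ((2*m).choose m : ℝ) * x ^ m * (1 - x) ^ m + bestOfF (2*m) x := by
      unfold bestOfF
      rw [show (2*m)/2 = m from by omega]
      rw [show Finset.Icc m (2*m) = insert m (Finset.Icc (m+1) (2*m)) from by
        ext a; simp only [Finset.mem_Icc, Finset.mem_insert]; omega,
        Finset.sum_insert (by simp)]
      rw [show 2*m - m = m from by omega]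
    rw [hsplit] at hr
    unfold updF
    rw [hr, show 2*m+1 = 2*m+1 from rfl, pascal_even m x]
    ring
end

section
/- For each integer ℓ ≥ 1, the function H(x) = ∑_{i=ℓ+1}^{2ℓ+1} C(2ℓ+1,i) x^i(1−x)^{2ℓ+1−i} satisfies: (a) H(1/2) = 1/2; (b) H'(1/2) = (2ℓ+1)C(2ℓ,ℓ)·4^{−ℓ} > 1; (c) H'(0) = 0; (d) H(x) < x for all x ∈ (0, 1/2). -/
/-- The updating function `H` of best-of-`(2ℓ+1)`. -/
noncomputable def bestOfOddH (l : ℕ) (x : ℝ) : ℝ :=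
  ∑ i ∈ Finset.Icc (l + 1) (2 * l + 1),
    ((2 * l + 1).choose i : ℝ) * x ^ i * (1 - x) ^ (2 * l + 1 - i)

/-!
`H` is the upper tail `∑_{ν > ℓ} b_{2ℓ+1,ν}` of the Bernstein basis, whose derivative
telescopes to `(2ℓ+1) b_{2ℓ,ℓ}`, i.e. `H'(x) = (2ℓ+1) C(2ℓ,ℓ) (x(1-x))^ℓ`; this gives (b)
and (c), and (b) is `> 1` by the central binomial bound `4^ℓ ≤ 2ℓ C(2ℓ,ℓ)`. Since `x(1-x)`
increases on `[0,1/2]`, `x ↦ x - H(x)` is strictly concave there; it vanishes at both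
endpoints, so it is positive in between, which is (d).
-/

open Finset Polynomial

theorem bernsteinPolynomial.derivative_sum_Icc (R : Type*) [CommRing R] {n k : ℕ} (hk : k ≤ n) :
    derivative (∑ ν ∈ Icc (k + 1) (n + 1), bernsteinPolynomial R (n + 1) ν) =
      (n + 1) * bernsteinPolynomial R n k := by
  have telescope := sum_Icc_sub hk (bernsteinPolynomial R n)
  rw [bernsteinPolynomial.eq_zero_of_lt R (lt_add_one n), zero_sub, sum_sub_distrib] at telescope
  rw [← map_add_right_Icc, sum_map, derivative_sum]
  simp only [addRightEmbedding_apply, bernsteinPolynomial.derivative_succ_aux, ← mul_sum,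
    sum_sub_distrib]
  rw [← neg_sub, telescope, neg_neg]

theorem Nat.sum_Icc_choose_two_mul_add_one (l : ℕ) :
    ∑ i ∈ Icc (l + 1) (2 * l + 1), (2 * l + 1).choose i = 4 ^ l := by
  have h := sum_range_add_sum_Ico (fun i => (2 * l + 1).choose i)
    (by omega : l + 1 ≤ 2 * l + 1 + 1)
  rw [Nat.sum_range_choose_halfway, Ico_add_one_right_eq_Icc, Nat.sum_range_choose, pow_succ,
    pow_mul] at h
  norm_num at h
  omega

theorem Nat.four_pow_lt_two_mul_add_one_mul_centralBinom {l : ℕ} (hl : 0 < l) :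
    4 ^ l < (2 * l + 1) * l.centralBinom :=
  calc 4 ^ l ≤ 2 * l * l.centralBinom := Nat.four_pow_le_two_mul_self_mul_centralBinom l hl
    _ < (2 * l + 1) * l.centralBinom := by
      gcongr
      · exact l.centralBinom_pos
      · omega

theorem bestOfOddH_eq_eval (l : ℕ) (x : ℝ) :
    bestOfOddH l x =
      (∑ ν ∈ Icc (l + 1) (2 * l + 1), bernsteinPolynomial ℝ (2 * l + 1) ν).eval x := by
  simp [bestOfOddH, bernsteinPolynomial, eval_finsetSum]

theorem hasDerivAt_bestOfOddH (l : ℕ) (x : ℝ) :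
    HasDerivAt (bestOfOddH l) ((2 * l + 1) * (2 * l).choose l * (x * (1 - x)) ^ l) x := by
  have h :=
    (∑ ν ∈ Icc (l + 1) (2 * l + 1), bernsteinPolynomial ℝ (2 * l + 1) ν).hasDerivAt x
  rw [bernsteinPolynomial.derivative_sum_Icc ℝ (by omega : l ≤ 2 * l)] at h
  rw [show bestOfOddH l = _ from funext (bestOfOddH_eq_eval l)]
  refine h.congr_deriv ?_
  rw [bernsteinPolynomial, Nat.sub_eq_of_eq_add (two_mul l)]
  simp only [Nat.cast_mul, Nat.cast_ofNat, eval_add, eval_mul, eval_ofNat, eval_natCast, eval_one,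
    eval_pow, eval_X, eval_sub, mul_pow]
  ring

theorem bestOfOddH_zero (l : ℕ) : bestOfOddH l 0 = 0 :=
  sum_eq_zero fun i hi => by simp [zero_pow ((Nat.succ_pos l).trans_le (mem_Icc.1 hi).1).ne']

theorem bestOfOddH_half (l : ℕ) : bestOfOddH l (1 / 2) = 1 / 2 := by
  have term : ∀ i ∈ Icc (l + 1) (2 * l + 1),
      ((2 * l + 1).choose i : ℝ) * (1 / 2) ^ i * (1 - 1 / 2) ^ (2 * l + 1 - i)
        = (2 * l + 1).choose i * (1 / 2) ^ (2 * l + 1) := by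
    intro i hi
    rw [show (1 : ℝ) - 1 / 2 = 1 / 2 by norm_num, mul_assoc, ← pow_add,
      Nat.add_sub_cancel' (mem_Icc.1 hi).2]
  rw [bestOfOddH, sum_congr rfl term, ← sum_mul, ← Nat.cast_sum,
    Nat.sum_Icc_choose_two_mul_add_one, pow_succ, pow_mul]
  push_cast
  rw [← mul_assoc, ← mul_pow]
  norm_num

theorem sub_bestOfOddH_strictConcaveOn {l : ℕ} (hl : 1 ≤ l) :
    StrictConcaveOn ℝ (Set.Icc 0 (1 / 2)) (fun x => x - bestOfOddH l x) := by
  have hasDeriv (x : ℝ) := (hasDerivAt_id' x).fun_sub (hasDerivAt_bestOfOddH l x)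
  refine StrictAntiOn.strictConcaveOn_of_deriv (convex_Icc _ _)
    (fun x _ => (hasDeriv x).continuousAt.continuousWithinAt) ?_
  rw [interior_Icc]
  intro a ha b hb hab
  have hmono : (a * (1 - a)) ^ l < (b * (1 - b)) ^ l :=
    pow_lt_pow_left₀ (by nlinarith [ha.2, hb.2]) (by nlinarith [ha.1, ha.2]) (by omega)
  rw [(hasDeriv a).deriv, (hasDeriv b).deriv]
  have hchoose : 0 < (2 * l).choose l := Nat.choose_pos (by omega)
  gcongr

theorem bestOfOddH_lt_self {l : ℕ} (hl : 1 ≤ l) {x : ℝ} (hx₀ : 0 < x) (hx₁ : x < 1 / 2) :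
    bestOfOddH l x < x := by
  have h := (sub_bestOfOddH_strictConcaveOn hl).lt_on_openSegment
    (Set.left_mem_Icc.2 (by norm_num)) (Set.right_mem_Icc.2 (by norm_num)) (by norm_num)
    (show x ∈ openSegment ℝ 0 (1 / 2) by
      rw [openSegment_eq_Ioo (by norm_num)]; exact ⟨hx₀, hx₁⟩)
  simp only [bestOfOddH_zero, bestOfOddH_half, sub_self, min_self] at h
  linarith

/-- Best-of-`(2ℓ+1)` is a quasi-majority functional voting:
(a) `H(1/2) = 1/2`; (b) `H'(1/2) = (2ℓ+1)C(2ℓ,ℓ)4^{−ℓ} > 1`; (c) `H'(0) = 0`;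
(d) `H(x) < x` on `(0, 1/2)`. -/
theorem stmt_8 (l : ℕ) (hl : 1 ≤ l) :
    bestOfOddH l (1/2) = 1/2
    ∧ deriv (bestOfOddH l) (1/2) = (2 * l + 1 : ℝ) * ((2 * l).choose l : ℝ) / 4 ^ l
    ∧ 1 < deriv (bestOfOddH l) (1/2)
    ∧ deriv (bestOfOddH l) 0 = 0
    ∧ ∀ x : ℝ, 0 < x → x < 1/2 → bestOfOddH l x < x := by
  have deriv_half : deriv (bestOfOddH l) (1 / 2) = (2 * l + 1) * (2 * l).choose l / 4 ^ l := by
    rw [(hasDerivAt_bestOfOddH l _).deriv, div_eq_mul_inv _ ((4 : ℝ) ^ l), ← inv_pow]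
    norm_num
  refine ⟨bestOfOddH_half l, deriv_half, ?_, ?_, fun x => bestOfOddH_lt_self hl⟩
  · rw [deriv_half, one_lt_div (by positivity)]
    exact_mod_cast Nat.four_pow_lt_two_mul_add_one_mul_centralBinom hl
  · simp [(hasDerivAt_bestOfOddH l 0).deriv, zero_pow (by omega : l ≠ 0)]
end

section
/- Let f: [0,1] → [0,1] be C², g(x) = f(x)(1 − f(x)), and K₁(g) = max_{x∈[0,1]}|g'(x)|. For functional voting with respect to f on a λ-expander graph with degree distribution π, with current configuration A, B = V∖A, the variance satisfies Var[π(A')] = ∑_{v∈A} π(v)² g(P(v,B)) + ∑_{v∈B} π(v)² g(P(v,A)), and |Var[π(A')] − ‖π‖₂² · g(1/2)| ≤ K₁(g)·( (1/2)‖π‖₂²·|2π(A)−1| + 2‖π‖₃^{3/2}·λ·√(π(A)(1−π(A))) ). -/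
open Finset

/-- Variance bound for functional voting with a `C²` betrayal function `f` on a
`λ`-expander graph: with `g(x) = f(x)(1−f(x))`,
`Var[π(A')] = ∑_{v∈A} π(v)² g(P(v,B)) + ∑_{v∈B} π(v)² g(P(v,A))` and
`|Var[π(A')] − ‖π‖₂² g(1/2)| ≤ K₁(g)((1/2)‖π‖₂²|2π(A)−1| + 2‖π‖₃^{3/2} λ √(π(A)(1−π(A))))`. -/
theorem stmt_11 {V : Type*} [Fintype V] [DecidableEq V] [Nonempty V]
    (G : SimpleGraph V) [DecidableRel G.Adj] (hconn : G.Connected)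
    (P : V → V → ℝ) (hP : ∀ u v, P u v = if G.Adj u v then (1 : ℝ) / G.degree u else 0)
    (π : V → ℝ) (hπ : ∀ v, π v = (G.degree v : ℝ) / ∑ u, (G.degree u : ℝ))
    (lam : ℝ) (hlam : 0 ≤ lam)
    (hexp : ∀ g : V → ℝ, ∑ v, π v * g v = 0 →
      ∑ u, π u * (∑ v, P u v * g v) ^ 2 ≤ lam ^ 2 * ∑ v, π v * g v ^ 2)
    (f : ℝ → ℝ) (hC2 : ContDiff ℝ 2 f)
    (hmap : ∀ x ∈ Set.Icc (0:ℝ) 1, f x ∈ Set.Icc (0:ℝ) 1)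
    (g : ℝ → ℝ) (hg : ∀ x, g x = f x * (1 - f x))
    (K₁ : ℝ) (hK₁ : IsGreatest ((fun x => |deriv g x|) '' Set.Icc (0:ℝ) 1) K₁)
    (A : Finset V) :
    |((∑ v ∈ A, π v ^ 2 * g (∑ b ∈ Aᶜ, P v b))
        + ∑ v ∈ Aᶜ, π v ^ 2 * g (∑ a ∈ A, P v a))
      - (∑ v, π v ^ 2) * g (1/2)|
      ≤ K₁ * ((1/2) * (∑ v, π v ^ 2) * |2 * (∑ a ∈ A, π a) - 1|
          + 2 * Real.sqrt (∑ v, π v ^ 3) * lam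
              * Real.sqrt ((∑ a ∈ A, π a) * (1 - ∑ a ∈ A, π a))) := by
  have hK0 : 0 ≤ K₁ := by
    obtain ⟨x, hx, hxe⟩ := hK₁.1
    exact hxe ▸ abs_nonneg _
  -- g is differentiable everywhere
  have hgfun : g = fun x => f x * (1 - f x) := funext hg
  have hfd : Differentiable ℝ f := hC2.differentiable (by norm_num)
  have hgdiff : ∀ x : ℝ, DifferentiableAt ℝ g x := by
    rw [hgfun]
    intro x
    exact (hfd x).mul ((differentiable_const (1:ℝ)).sub hfd x)
  -- Lipschitz bound on [0,1]
  have hLip : ∀ x ∈ Set.Icc (0:ℝ) 1, ∀ y ∈ Set.Icc (0:ℝ) 1,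
      |g x - g y| ≤ K₁ * |x - y| := by
    intro x hx y hy
    have := Convex.norm_image_sub_le_of_norm_deriv_le (f := g) (s := Set.Icc (0:ℝ) 1)
      (fun z _ => hgdiff z) (fun z hz => by
        simpa [Real.norm_eq_abs] using hK₁.2 ⟨z, hz, rfl⟩) (convex_Icc 0 1) hy hx
    simpa [Real.norm_eq_abs] using this
  by_cases hdeg : ∀ v : V, 0 < G.degree v
  · -- main case
    set πA : ℝ := ∑ a ∈ A, π a with hπAdef
    have hD : (0:ℝ) < ∑ u, (G.degree u : ℝ) :=
      Finset.sum_pos (fun u _ => by exact_mod_cast hdeg u) univ_nonempty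
    have hπnn : ∀ v, 0 ≤ π v := fun v => by
      rw [hπ]; positivity
    have hπsum : ∑ v, π v = 1 := by
      simp_rw [hπ]
      rw [← Finset.sum_div, div_self hD.ne']
    have hPnn : ∀ v u, 0 ≤ P v u := by
      intro v u; rw [hP]
      split
      · positivity
      · exact le_refl 0
    have hProw : ∀ v, ∑ u, P v u = 1 := by
      intro v
      simp_rw [hP]
      rw [Finset.sum_ite, Finset.sum_const, Finset.sum_const_zero, add_zero]
      have hcard : (Finset.univ.filter (G.Adj v)).card = G.degree v := by
        rw [← SimpleGraph.neighborFinset_eq_filter, SimpleGraph.card_neighborFinset_eq_degree]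
      rw [hcard, nsmul_eq_mul]
      have : (G.degree v : ℝ) ≠ 0 := by exact_mod_cast (hdeg v).ne'
      field_simp
    have hPsplit : ∀ v, (∑ a ∈ A, P v a) + (∑ b ∈ Aᶜ, P v b) = 1 := by
      intro v; rw [Finset.sum_add_sum_compl, hProw]
    have hPA0 : ∀ v, 0 ≤ ∑ a ∈ A, P v a :=
      fun v => Finset.sum_nonneg fun a _ => hPnn v a
    have hPB0 : ∀ v, 0 ≤ ∑ b ∈ Aᶜ, P v b :=
      fun v => Finset.sum_nonneg fun b _ => hPnn v b
    have hPA1 : ∀ v, ∑ a ∈ A, P v a ≤ 1 := by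
      intro v; nlinarith [hPB0 v, hPsplit v]
    have hPB1 : ∀ v, ∑ b ∈ Aᶜ, P v b ≤ 1 := by
      intro v; nlinarith [hPA0 v, hPsplit v]
    have hπA0 : 0 ≤ πA := Finset.sum_nonneg fun a _ => hπnn a
    have hπA1 : πA ≤ 1 := by
      rw [← hπsum]
      exact Finset.sum_le_sum_of_subset_of_nonneg (Finset.subset_univ A)
        (fun v _ _ => hπnn v)
    have hπAc : ∑ v ∈ Aᶜ, π v = 1 - πA := by
      have := Finset.sum_add_sum_compl A π
      rw [hπsum] at this; linarith
    -- spectral estimate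
    set h : V → ℝ := fun u => (if u ∈ A then (1:ℝ) else 0) - πA with hhdef
    have hind : ∀ (c : V → ℝ), ∑ u, c u * (if u ∈ A then (1:ℝ) else 0) = ∑ u ∈ A, c u := by
      intro c
      simp [mul_ite, mul_one, mul_zero, Finset.sum_ite_mem]
    have hmean : ∑ v, π v * h v = 0 := by
      simp_rw [hhdef, mul_sub]
      rw [Finset.sum_sub_distrib, hind π, ← Finset.sum_mul, hπsum]
      simp [hπAdef]
    have hDv : ∀ v, ∑ u, P v u * h u = (∑ a ∈ A, P v a) - πA := by
      intro v
      simp_rw [hhdef, mul_sub]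
      rw [Finset.sum_sub_distrib, hind (P v), ← Finset.sum_mul, hProw v, one_mul]
    have hvar : ∑ v, π v * h v ^ 2 = πA * (1 - πA) := by
      rw [← Finset.sum_add_sum_compl A (fun v => π v * h v ^ 2)]
      have h1 : ∑ v ∈ A, π v * h v ^ 2 = (∑ v ∈ A, π v) * (1 - πA) ^ 2 := by
        rw [Finset.sum_mul]
        refine Finset.sum_congr rfl fun v hv => by simp [hhdef, hv]
      have h2 : ∑ v ∈ Aᶜ, π v * h v ^ 2 = (∑ v ∈ Aᶜ, π v) * πA ^ 2 := by
        rw [Finset.sum_mul]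
        refine Finset.sum_congr rfl fun v hv => by
          have : v ∉ A := by simpa using hv
          simp [hhdef, this]
      rw [h1, h2, ← hπAdef, hπAc]; ring
    have hspec : ∑ v, π v * ((∑ a ∈ A, P v a) - πA) ^ 2 ≤ lam ^ 2 * (πA * (1 - πA)) := by
      have := hexp h hmean
      rw [hvar] at this
      simpa only [hDv] using this
    -- Cauchy–Schwarz step
    have hCS : ∑ v, π v ^ 2 * |(∑ a ∈ A, P v a) - πA|
        ≤ Real.sqrt (∑ v, π v ^ 3) * (lam * Real.sqrt (πA * (1 - πA))) := by
      have key := Real.sum_mul_le_sqrt_mul_sqrt Finset.univ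
        (fun v => π v * Real.sqrt (π v))
        (fun v => Real.sqrt (π v) * |(∑ a ∈ A, P v a) - πA|)
      have e1 : ∀ v : V, (π v * Real.sqrt (π v)) * (Real.sqrt (π v) * |(∑ a ∈ A, P v a) - πA|)
          = π v ^ 2 * |(∑ a ∈ A, P v a) - πA| := by
        intro v
        have hss : Real.sqrt (π v) * Real.sqrt (π v) = π v := Real.mul_self_sqrt (hπnn v)
        calc (π v * Real.sqrt (π v)) * (Real.sqrt (π v) * |(∑ a ∈ A, P v a) - πA|)
            = (Real.sqrt (π v) * Real.sqrt (π v)) * (π v * |(∑ a ∈ A, P v a) - πA|) := by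
              ring
          _ = π v ^ 2 * |(∑ a ∈ A, P v a) - πA| := by rw [hss]; ring
      have e2 : ∀ v : V, (π v * Real.sqrt (π v)) ^ 2 = π v ^ 3 := by
        intro v
        rw [mul_pow, Real.sq_sqrt (hπnn v)]; ring
      have e3 : ∀ v : V, (Real.sqrt (π v) * |(∑ a ∈ A, P v a) - πA|) ^ 2
          = π v * ((∑ a ∈ A, P v a) - πA) ^ 2 := by
        intro v
        rw [mul_pow, Real.sq_sqrt (hπnn v), sq_abs]
      simp_rw [e1, e2, e3] at key
      refine key.trans (mul_le_mul_of_nonneg_left ?_ (Real.sqrt_nonneg _))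
      calc Real.sqrt (∑ v, π v * ((∑ a ∈ A, P v a) - πA) ^ 2)
          ≤ Real.sqrt (lam ^ 2 * (πA * (1 - πA))) := Real.sqrt_le_sqrt hspec
        _ = lam * Real.sqrt (πA * (1 - πA)) := by
            rw [Real.sqrt_mul (sq_nonneg lam), Real.sqrt_sq hlam]
    -- main chain
    have hsq : (∑ v, π v ^ 2) = (∑ v ∈ A, π v ^ 2) + ∑ v ∈ Aᶜ, π v ^ 2 :=
      (Finset.sum_add_sum_compl A _).symm
    have half_mem : (1/2 : ℝ) ∈ Set.Icc (0:ℝ) 1 := by norm_num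
    have habs : |((∑ v ∈ A, π v ^ 2 * g (∑ b ∈ Aᶜ, P v b))
          + ∑ v ∈ Aᶜ, π v ^ 2 * g (∑ a ∈ A, P v a)) - (∑ v, π v ^ 2) * g (1/2)|
        ≤ (∑ v ∈ A, π v ^ 2 * |g (∑ b ∈ Aᶜ, P v b) - g (1/2)|)
          + ∑ v ∈ Aᶜ, π v ^ 2 * |g (∑ a ∈ A, P v a) - g (1/2)| := by
      rw [hsq, add_mul, Finset.sum_mul, Finset.sum_mul]
      have : ((∑ v ∈ A, π v ^ 2 * g (∑ b ∈ Aᶜ, P v b))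
          + ∑ v ∈ Aᶜ, π v ^ 2 * g (∑ a ∈ A, P v a))
          - ((∑ v ∈ A, π v ^ 2 * g (1/2)) + ∑ v ∈ Aᶜ, π v ^ 2 * g (1/2))
          = (∑ v ∈ A, π v ^ 2 * (g (∑ b ∈ Aᶜ, P v b) - g (1/2)))
            + ∑ v ∈ Aᶜ, π v ^ 2 * (g (∑ a ∈ A, P v a) - g (1/2)) := by
        rw [add_sub_add_comm, ← Finset.sum_sub_distrib, ← Finset.sum_sub_distrib]
        congr 1 <;> exact Finset.sum_congr rfl fun v _ => by ring
      rw [this]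
      refine (abs_add_le _ _).trans ?_
      gcongr <;>
        refine (Finset.abs_sum_le_sum_abs _ _).trans (le_of_eq (Finset.sum_congr rfl
          fun v _ => by rw [abs_mul, abs_of_nonneg (sq_nonneg (π v))]))
    have hterm1 : ∀ v ∈ A, |g (∑ b ∈ Aᶜ, P v b) - g (1/2)|
        ≤ K₁ * (|(∑ a ∈ A, P v a) - πA| + |πA - 1/2|) := by
      intro v _
      refine (hLip _ ⟨hPB0 v, hPB1 v⟩ _ half_mem).trans ?_
      have h1 : |(∑ b ∈ Aᶜ, P v b) - 1/2| ≤ |(∑ a ∈ A, P v a) - πA| + |πA - 1/2| := by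
        have : (∑ b ∈ Aᶜ, P v b) - 1/2
            = (πA - (∑ a ∈ A, P v a)) + (πA - 1/2) - (2*πA - 1) := by
          have := hPsplit v; linarith
        calc |(∑ b ∈ Aᶜ, P v b) - 1/2| = |(πA - (∑ a ∈ A, P v a)) + (1/2 - πA)| := by
              rw [this]; ring_nf
          _ ≤ |πA - (∑ a ∈ A, P v a)| + |1/2 - πA| := abs_add_le _ _
          _ = |(∑ a ∈ A, P v a) - πA| + |πA - 1/2| := by rw [abs_sub_comm, abs_sub_comm (1/2:ℝ)]
      exact mul_le_mul_of_nonneg_left h1 hK0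
    have hterm2 : ∀ v ∈ Aᶜ, |g (∑ a ∈ A, P v a) - g (1/2)|
        ≤ K₁ * (|(∑ a ∈ A, P v a) - πA| + |πA - 1/2|) := by
      intro v _
      refine (hLip _ ⟨hPA0 v, hPA1 v⟩ _ half_mem).trans ?_
      have h1 : |(∑ a ∈ A, P v a) - 1/2| ≤ |(∑ a ∈ A, P v a) - πA| + |πA - 1/2| := by
        calc |(∑ a ∈ A, P v a) - 1/2|
            = |((∑ a ∈ A, P v a) - πA) + (πA - 1/2)| := by ring_nf
          _ ≤ _ := abs_add_le _ _
      exact mul_le_mul_of_nonneg_left h1 hK0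
    have hmid : (∑ v ∈ A, π v ^ 2 * |g (∑ b ∈ Aᶜ, P v b) - g (1/2)|)
          + ∑ v ∈ Aᶜ, π v ^ 2 * |g (∑ a ∈ A, P v a) - g (1/2)|
        ≤ K₁ * ((∑ v, π v ^ 2 * |(∑ a ∈ A, P v a) - πA|) + (∑ v, π v ^ 2) * |πA - 1/2|) := by
      have hbound : (∑ v ∈ A, π v ^ 2 * |g (∑ b ∈ Aᶜ, P v b) - g (1/2)|)
            + ∑ v ∈ Aᶜ, π v ^ 2 * |g (∑ a ∈ A, P v a) - g (1/2)|
          ≤ ∑ v, π v ^ 2 * (K₁ * (|(∑ a ∈ A, P v a) - πA| + |πA - 1/2|)) := by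
        rw [← Finset.sum_add_sum_compl A
          (fun v => π v ^ 2 * (K₁ * (|(∑ a ∈ A, P v a) - πA| + |πA - 1/2|)))]
        gcongr with v hv v hv
        · exact hterm1 v hv
        · exact hterm2 v hv
      refine hbound.trans (le_of_eq ?_)
      simp only [Finset.mul_sum, Finset.sum_mul, mul_add, ← Finset.sum_add_distrib]
      exact Finset.sum_congr rfl fun v _ => by ring
    refine (habs.trans hmid).trans ?_
    have hhalf : |πA - 1/2| = (1/2) * |2 * πA - 1| := by
      rw [show (2*πA - 1 : ℝ) = 2*(πA - 1/2) by ring, abs_mul, abs_two]; ring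
    rw [hhalf]
    refine mul_le_mul_of_nonneg_left ?_ hK0
    have hQ : 0 ≤ Real.sqrt (∑ v, π v ^ 3) * (lam * Real.sqrt (πA * (1 - πA))) := by
      positivity
    nlinarith [hCS, hQ]
  · -- degenerate case: some vertex has degree 0, hence all do, π ≡ 0
    push_neg at hdeg
    obtain ⟨v0, hv0⟩ := hdeg
    have hv0' : G.degree v0 = 0 := Nat.le_zero.mp hv0
    have hall : ∀ u : V, G.degree u = 0 := by
      intro u
      by_contra hu
      have hne : v0 ≠ u := by rintro rfl; exact hu hv0'
      obtain ⟨w⟩ := hconn.preconnected v0 u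
      have hnil : ¬ w.Nil := SimpleGraph.Walk.not_nil_of_ne hne
      have hadj := w.adj_snd hnil
      have : 0 < G.degree v0 := (G.degree_pos_iff_exists_adj v0).2 ⟨_, hadj⟩
      omega
    have hπ0 : ∀ u : V, π u = 0 := by intro u; simp [hπ, hall]
    simp [hπ0]
end
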